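/- Let V(u) = Σ_{1≤j<k≤n} [δ_{jk} U + W](|u_j - u_k|²) where δ_{jk} = 1 if |j-k| = 1 or {j,k} = {1,n} and 0 otherwise, with U, W ∈ C¹ on (0,∞). Then at the regular n-gon configuration a_j = a e^{ijζ} (ζ = 2π/n), the gradient with respect to u_j equals a_j · (2U'(a²s_1²)s_1² + Σ_{k=1}^{n-1} W'(a²s_k²)s_k²), where s_k = 2 sin(kπ/n). In particular, if U'(a²s_1²) = -(1/(2s_1²)) Σ_{k=1}^{n-1} W'(a²s_k²)s_k², then the n-gon is a critical point of V. -/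

import Mathlib

/-- The potential of the circular chain: `V(u) = Σ_{j<k} [δ_{jk} U + W](|u_j - u_k|²)`,
where `δ_{jk} = 1` iff `j,k` are adjacent in the cycle (indices `0,…,n-1`). -/
noncomputable def chainV (n : ℕ) (U W : ℝ → ℝ) (u : Fin n → ℂ) : ℝ :=
  ∑ j : Fin n, ∑ k : Fin n, if j < k then
    ((if j.val + 1 = k.val ∨ (j.val = 0 ∧ k.val = n - 1)
        then U (‖u j - u k‖ ^ 2) else 0)
      + W (‖u j - u k‖ ^ 2))
  else 0

/-- The real-linear functional `h ↦ ⟨G, h⟩_{ℝ²} = re(conj G · h)` on `ℂ ≅ ℝ²`;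
this is the derivative functional of a function whose (real) gradient is `G`. -/
noncomputable def gradFunctional (G : ℂ) : ℂ →L[ℝ] ℝ :=
  Complex.reCLM.comp
    (((ContinuousLinearMap.mul ℂ ℂ) ((starRingEnd ℂ) G)).restrictScalars ℝ)

/-!
Moving `u_j` only changes the pair terms containing `j`, so the real gradient of a pair
potential `∑ φ_{pq}(|u_p - u_q|²)` with respect to `u_j` is
`∑_k 2 (φ'_{jk} + φ'_{kj})(|u_j - u_k|²) (u_j - u_k)`. At the regular `n`-gon
`a_j = a ωʲ`, `ω = e^{2πi/n}`, one has `a_j - a_{j+m} = a_j (1 - ωᵐ)` and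
`|1 - ωᵐ| = s_m`, so the gradient is `a_j ∑_m 2 c_m (1 - ωᵐ)` with real weights
`c_m = c_{-m}` (the `U`-bond only for `m = ±1`). The sum is invariant under complex
conjugation (reindex `m ↦ -m`), hence real, and equals `∑_m c_m s_m²` because
`Re (1 - ωᵐ) = |1 - ωᵐ|² / 2`.
-/

open Complex Finset Function
open scoped ComplexConjugate

lemma gradFunctional_eq_innerSL (G : ℂ) : gradFunctional G = innerSL ℝ G := by
  ext h
  simp [gradFunctional, Complex.inner, mul_comm]

section PairPotential

variable {E ι : Type*} [NormedAddCommGroup E] [InnerProductSpace ℝ E] [DecidableEq ι]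
  {φ : ι → ι → ℝ → ℝ} {φ' : ι → ι → ℝ} {u : ι → E}

lemma hasFDerivAt_pairPotential_update
    (hφ : ∀ p q, p ≠ q → HasDerivAt (φ p q) (φ' p q) (‖u p - u q‖ ^ 2)) (j p q : ι) :
    HasFDerivAt (fun z => φ p q (‖update u j z p - update u j z q‖ ^ 2))
      (innerSL ℝ ((if p = j then (2 * φ' j q) • (u j - u q) else 0)
        + (if q = j then (2 * φ' p j) • (u j - u p) else 0))) (u j) := by
  by_cases hp : p = j <;> by_cases hq : q = j
  · subst hp hq
    simpa using hasFDerivAt_const _ _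
  · subst hp
    have h := (hφ p q (Ne.symm hq)).comp_hasFDerivAt (u p)
      ((hasFDerivAt_id (u p)).sub_const (u q)).norm_sq
    simp only [update_self, update_of_ne hq, if_true, if_neg hq, add_zero]
    refine h.congr_fderiv ?_
    ext v
    simp
    ring
  · subst hq
    have h := (hφ p q hp).comp_hasFDerivAt (u q)
      ((hasFDerivAt_id (u q)).const_sub (u p)).norm_sq
    simp only [update_self, update_of_ne hp, if_true, if_neg hp, zero_add]
    refine h.congr_fderiv ?_
    ext v
    simp
    ring
  · simpa [update_of_ne hp, update_of_ne hq, hp, hq]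
      using hasFDerivAt_const (φ p q (‖u p - u q‖ ^ 2)) (u j)

theorem hasFDerivAt_sum_pairPotential_update [Fintype ι]
    (hφ : ∀ p q, p ≠ q → HasDerivAt (φ p q) (φ' p q) (‖u p - u q‖ ^ 2)) (j : ι) :
    HasFDerivAt (fun z => ∑ p, ∑ q, φ p q (‖update u j z p - update u j z q‖ ^ 2))
      (innerSL ℝ (∑ k, (2 * (φ' j k + φ' k j)) • (u j - u k))) (u j) := by
  refine (HasFDerivAt.fun_sum fun p _ => HasFDerivAt.fun_sum fun q _ =>
    hasFDerivAt_pairPotential_update hφ j p q).congr_fderiv ?_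
  simp only [← map_sum, sum_add_distrib, ← ite_zero_smul]
  simp [mul_add, add_smul, sum_add_distrib]

end PairPotential

lemma re_one_sub_of_norm_eq_one {w : ℂ} (hw : ‖w‖ = 1) : (1 - w).re = ‖1 - w‖ ^ 2 / 2 := by
  rw [← normSq_eq_norm_sq, normSq_apply]
  rw [← sq_eq_sq₀ (norm_nonneg _) zero_le_one, ← normSq_eq_norm_sq, normSq_apply] at hw
  simp only [sub_re, one_re, sub_im, one_im]
  nlinarith

noncomputable def chord (n k : ℕ) : ℝ := 2 * Real.sin (k * Real.pi / n)

lemma chord_sub {n k : ℕ} (hk : k ≤ n) : chord n (n - k) = chord n k := by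
  rcases Nat.eq_zero_or_pos n with rfl | hn
  · rw [Nat.le_zero.mp hk]
  rw [chord, chord, Nat.cast_sub hk, sub_mul, sub_div, mul_div_cancel_left₀ _ (by positivity),
    Real.sin_pi_sub]

lemma chord_pos {n k : ℕ} (hk : 0 < k) (hkn : k < n) : 0 < chord n k := by
  have hkn' : (k : ℝ) < n := by exact_mod_cast hkn
  have hn : (0 : ℝ) < n := by exact_mod_cast hk.trans hkn
  refine mul_pos two_pos (Real.sin_pos_of_pos_of_lt_pi (by positivity) ?_)
  rw [div_lt_iff₀ hn, mul_comm]
  exact mul_lt_mul_of_pos_left hkn' Real.pi_pos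

noncomputable def polygonRoot (n : ℕ) : ℂ := exp (2 * Real.pi * I / n)

section PolygonRoot

variable {n : ℕ}

lemma polygonRoot_pow (k : ℕ) :
    polygonRoot n ^ k = exp (I * ((2 * Real.pi * k / n : ℝ) : ℂ)) := by
  rw [polygonRoot, ← exp_nat_mul]
  push_cast
  ring_nf

lemma norm_polygonRoot_pow (k : ℕ) : ‖polygonRoot n ^ k‖ = 1 := by
  rw [polygonRoot_pow, mul_comm, norm_exp_ofReal_mul_I]

lemma norm_one_sub_polygonRoot_pow_sq (k : ℕ) :
    ‖1 - polygonRoot n ^ k‖ ^ 2 = chord n k ^ 2 := by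
  rw [norm_sub_rev, polygonRoot_pow, norm_exp_I_mul_ofReal_sub_one, Real.norm_eq_abs, sq_abs,
    chord]
  ring_nf

lemma polygonRoot_pow_val_add (p q : Fin n) :
    polygonRoot n ^ (p + q : Fin n).val = polygonRoot n ^ p.val * polygonRoot n ^ q.val := by
  have hω : IsPrimitiveRoot (polygonRoot n) n := isPrimitiveRoot_exp n p.pos.ne'
  have hmod := pow_mod_orderOf (polygonRoot n) (p.val + q.val)
  rw [← hω.eq_orderOf] at hmod
  rw [Fin.val_add, hmod, pow_add]

lemma polygonRoot_pow_val_neg (m : Fin n) :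
    polygonRoot n ^ (-m : Fin n).val = conj (polygonRoot n ^ m.val) := by
  obtain ⟨k, rfl⟩ := Nat.exists_eq_add_one_of_ne_zero m.pos.ne'
  rw [← inv_eq_conj (norm_polygonRoot_pow _)]
  exact eq_inv_of_mul_eq_one_left (by rw [← polygonRoot_pow_val_add, neg_add_cancel]; rfl)

theorem sum_mul_one_sub_polygonRoot_pow (c : Fin n → ℝ) (hc : ∀ m, c (-m) = c m) :
    ∑ m, (c m : ℂ) * (1 - polygonRoot n ^ m.val)
      = ((∑ m, c m * chord n m ^ 2 / 2 : ℝ) : ℂ) := by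
  set S := ∑ m, (c m : ℂ) * (1 - polygonRoot n ^ m.val)
  have hS : conj S = S :=
    calc conj S = ∑ m, (c (-m) : ℂ) * (1 - polygonRoot n ^ (-m : Fin n).val) := by
          simp [S, polygonRoot_pow_val_neg, hc]
      _ = S := Equiv.sum_comp (Equiv.neg (Fin n)) (fun m => (c m : ℂ) * (1 - polygonRoot n ^ m.val))
  rw [← conj_eq_iff_re.mp hS]
  simp [S, re_sum, re_one_sub_of_norm_eq_one (norm_polygonRoot_pow _),
    norm_one_sub_polygonRoot_pow_sq, mul_div_assoc]

end PolygonRoot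

noncomputable def regularPolygon (n : ℕ) (a : ℝ) (j : Fin n) : ℂ := a * polygonRoot n ^ j.val

section RegularPolygon

variable {n : ℕ} {a : ℝ}

lemma regularPolygon_add (j m : Fin n) :
    regularPolygon n a (j + m) = regularPolygon n a j * polygonRoot n ^ m.val := by
  rw [regularPolygon, regularPolygon, polygonRoot_pow_val_add, mul_assoc]

lemma regularPolygon_sub_add (j m : Fin n) :
    regularPolygon n a j - regularPolygon n a (j + m)
      = regularPolygon n a j * (1 - polygonRoot n ^ m.val) := by
  rw [regularPolygon_add, mul_one_sub]

lemma norm_regularPolygon_sub_add_sq (j m : Fin n) :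
    ‖regularPolygon n a j - regularPolygon n a (j + m)‖ ^ 2 = a ^ 2 * chord n m ^ 2 := by
  rw [regularPolygon_sub_add, norm_mul, mul_pow, norm_one_sub_polygonRoot_pow_sq, regularPolygon,
    norm_mul, norm_polygonRoot_pow, mul_one, norm_real, Real.norm_eq_abs, sq_abs]

lemma regularPolygon_injective (ha : a ≠ 0) : Injective (regularPolygon n a) := by
  intro p q h
  exact Fin.ext ((isPrimitiveRoot_exp n p.pos.ne').pow_inj p.isLt q.isLt
    (mul_left_cancel₀ (ofReal_ne_zero.mpr ha) h))

end RegularPolygon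

/-- The `(p, q)` summand of `chainV`, with `A`, `B` standing for the values of `U`, `W`. -/
noncomputable def cycleBond (n : ℕ) (A B : ℝ) (p q : Fin n) : ℝ :=
  if p < q then (if p.val + 1 = q.val ∨ (p.val = 0 ∧ q.val = n - 1) then A else 0) + B else 0

/-- The total weight of the two summands of `chainV` joining vertices at cyclic offset `k`. -/
noncomputable def cycleWeight (n : ℕ) (A B : ℝ) (k : ℕ) : ℝ :=
  (if k = 1 ∨ k = n - 1 then A else 0) + B

lemma hasDerivAt_cycleBond {n : ℕ} {U W : ℝ → ℝ} {U' W' x : ℝ} (hU : HasDerivAt U U' x)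
    (hW : HasDerivAt W W' x) (p q : Fin n) :
    HasDerivAt (fun y => cycleBond n (U y) (W y) p q) (cycleBond n U' W' p q) x := by
  unfold cycleBond
  by_cases hpq : p < q
  · by_cases hadj : p.val + 1 = q.val ∨ (p.val = 0 ∧ q.val = n - 1)
    · simpa only [hpq, hadj, if_true] using hU.fun_add hW
    · simpa only [hpq, hadj, if_true, if_false] using (hasDerivAt_const x 0).fun_add hW
  · simpa only [hpq, if_false] using hasDerivAt_const x (0 : ℝ)

lemma cycleBond_add_cycleBond {n : ℕ} (A B : ℝ) (j m : Fin n) (hm : m.val ≠ 0) :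
    cycleBond n A B j (j + m) + cycleBond n A B (j + m) j = cycleWeight n A B m := by
  have hk : (j + m).val = j.val + m.val ∨ (j + m).val + n = j.val + m.val := by
    rw [Fin.val_add]
    rcases lt_or_ge (j.val + m.val) n with h | h
    · exact Or.inl (Nat.mod_eq_of_lt h)
    · right
      rw [Nat.mod_eq_sub_mod h, Nat.mod_eq_of_lt (by omega)]
      omega
  have hj := j.isLt
  have hm' := m.isLt
  have hkn := (j + m).isLt
  unfold cycleBond cycleWeight
  simp only [Fin.lt_def]
  generalize (j + m).val = k at *
  split_ifs <;> first | omega | simp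

lemma cycleWeight_sub {n k : ℕ} (A B : ℝ) (hk : k ≤ n) :
    cycleWeight n A B (n - k) = cycleWeight n A B k := by
  unfold cycleWeight
  congr 1
  exact if_congr (by omega) rfl rfl

lemma cycleWeight_val_neg {n : ℕ} (f g : ℝ → ℝ) (m : Fin n) :
    cycleWeight n (f (chord n (-m : Fin n) ^ 2)) (g (chord n (-m : Fin n) ^ 2)) (-m : Fin n)
      = cycleWeight n (f (chord n m ^ 2)) (g (chord n m ^ 2)) m := by
  have hneg : (-m : Fin n).val = m.val ∨ (-m : Fin n).val = n - m.val := by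
    rw [Fin.val_neg']
    rcases Nat.eq_zero_or_pos m.val with h | h
    · simp [h]
    · exact Or.inr (Nat.mod_eq_of_lt (by omega))
  rcases hneg with h | h <;> rw [h]
  rw [chord_sub m.isLt.le, cycleWeight_sub _ _ m.isLt.le]

lemma cycleWeight_mul (n : ℕ) (A B r : ℝ) (k : ℕ) :
    cycleWeight n A B k * r = cycleWeight n (A * r) (B * r) k := by
  simp only [cycleWeight, add_mul, ite_mul, zero_mul]

lemma sum_range_cycleWeight {n : ℕ} (hn : 3 ≤ n) (f g : ℕ → ℝ) (hf : f (n - 1) = f 1)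
    (hg : g 0 = 0) :
    ∑ k ∈ range n, cycleWeight n (f k) (g k) k = 2 * f 1 + ∑ k ∈ range (n - 1), g (k + 1) := by
  have hadj : (range n).filter (fun k => k = 1 ∨ k = n - 1) = {1, n - 1} := by
    ext k
    simp only [mem_filter, mem_range, mem_insert, mem_singleton]
    omega
  obtain ⟨m, rfl⟩ : ∃ m, n = m + 1 := ⟨n - 1, by omega⟩
  simp only [cycleWeight]
  rw [sum_add_distrib, ← sum_filter, hadj, sum_pair (by omega), hf, sum_range_succ', hg,
    Nat.add_sub_cancel]
  ring

section ChainAtPolygon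

variable {n : ℕ} {U W U' W' : ℝ → ℝ} {a : ℝ}

lemma cycleBond_smul_regularPolygon_sub (j m : Fin n) :
    (2 * (cycleBond n (U' (‖regularPolygon n a j - regularPolygon n a (j + m)‖ ^ 2))
          (W' (‖regularPolygon n a j - regularPolygon n a (j + m)‖ ^ 2)) j (j + m)
        + cycleBond n (U' (‖regularPolygon n a (j + m) - regularPolygon n a j‖ ^ 2))
          (W' (‖regularPolygon n a (j + m) - regularPolygon n a j‖ ^ 2)) (j + m) j))
      • (regularPolygon n a j - regularPolygon n a (j + m))
      = regularPolygon n a j * (2 * (cycleWeight n (U' (a ^ 2 * chord n m ^ 2))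
          (W' (a ^ 2 * chord n m ^ 2)) m : ℂ) * (1 - polygonRoot n ^ m.val)) := by
  rw [norm_sub_rev (regularPolygon n a (j + m)), norm_regularPolygon_sub_add_sq,
    regularPolygon_sub_add]
  rcases eq_or_ne m.val 0 with hm | hm
  · simp [hm]
  · rw [cycleBond_add_cycleBond _ _ _ _ hm, real_smul]
    push_cast
    ring

lemma sum_cycleWeight_mul_chord_sq (hn : 3 ≤ n) :
    ∑ m : Fin n, cycleWeight n (U' (a ^ 2 * chord n m ^ 2)) (W' (a ^ 2 * chord n m ^ 2)) m
        * chord n m ^ 2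
      = 2 * U' (a ^ 2 * chord n 1 ^ 2) * chord n 1 ^ 2
        + ∑ k ∈ range (n - 1), W' (a ^ 2 * chord n (k + 1) ^ 2) * chord n (k + 1) ^ 2 := by
  rw [Fin.sum_univ_eq_sum_range (fun k =>
      cycleWeight n (U' (a ^ 2 * chord n k ^ 2)) (W' (a ^ 2 * chord n k ^ 2)) k * chord n k ^ 2),
    sum_congr rfl fun k _ => cycleWeight_mul _ _ _ _ _,
    sum_range_cycleWeight hn (fun k => U' (a ^ 2 * chord n k ^ 2) * chord n k ^ 2)
      (fun k => W' (a ^ 2 * chord n k ^ 2) * chord n k ^ 2)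
      (by rw [chord_sub (by omega : 1 ≤ n)]) (by simp [chord])]
  ring

theorem hasFDerivAt_chainV_update_regularPolygon (hn : 3 ≤ n)
    (hU : ∀ x > (0 : ℝ), HasDerivAt U (U' x) x) (hW : ∀ x > (0 : ℝ), HasDerivAt W (W' x) x)
    (ha : a ≠ 0) (j : Fin n) :
    HasFDerivAt (fun z => chainV n U W (update (regularPolygon n a) j z))
      (gradFunctional (regularPolygon n a j * ((2 * U' (a ^ 2 * chord n 1 ^ 2) * chord n 1 ^ 2
          + ∑ k ∈ range (n - 1), W' (a ^ 2 * chord n (k + 1) ^ 2) * chord n (k + 1) ^ 2 : ℝ) : ℂ)))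
      (regularPolygon n a j) := by
  set P := regularPolygon n a
  have hgrad := hasFDerivAt_sum_pairPotential_update (u := P)
    (φ := fun p q x => cycleBond n (U x) (W x) p q)
    (φ' := fun p q => cycleBond n (U' (‖P p - P q‖ ^ 2)) (W' (‖P p - P q‖ ^ 2)) p q)
    (fun p q hpq => by
      have hd : 0 < ‖P p - P q‖ ^ 2 :=
        pow_pos (norm_pos_iff.mpr (sub_ne_zero.mpr ((regularPolygon_injective ha).ne hpq))) 2
      exact hasDerivAt_cycleBond (hU _ hd) (hW _ hd) p q) j
  rw [gradFunctional_eq_innerSL]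
  refine hgrad.congr_fderiv (congrArg _ ?_)
  have : NeZero n := ⟨by omega⟩
  set c : Fin n → ℝ := fun m =>
    cycleWeight n (U' (a ^ 2 * chord n m ^ 2)) (W' (a ^ 2 * chord n m ^ 2)) m
  have hc : ∀ m, c (-m) = c m := fun m =>
    cycleWeight_val_neg (fun x => U' (a ^ 2 * x)) (fun x => W' (a ^ 2 * x)) m
  calc _ = ∑ m : Fin n, P j * (2 * (c m : ℂ) * (1 - polygonRoot n ^ m.val)) := by
        rw [← Equiv.sum_comp (Equiv.addLeft j)]
        exact sum_congr rfl fun m _ => cycleBond_smul_regularPolygon_sub j m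
    _ = P j * (2 * ∑ m : Fin n, (c m : ℂ) * (1 - polygonRoot n ^ m.val)) := by
        simp only [mul_sum, mul_assoc]
    _ = _ := by
        rw [sum_mul_one_sub_polygonRoot_pow c hc, ← sum_div, sum_cycleWeight_mul_chord_sq hn]
        push_cast
        ring

end ChainAtPolygon

/-- At the regular `n`-gon `a_j = a e^{ijζ}` (`ζ = 2π/n`), the gradient of `V` with
respect to `u_j` equals `a_j (2U'(a²s₁²)s₁² + Σ_{k=1}^{n-1} W'(a²s_k²)s_k²)`, where
`s_k = 2 sin(kπ/n)`. In particular, if `U'(a²s₁²) = -(1/(2s₁²)) Σ_k W'(a²s_k²)s_k²`,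
then the `n`-gon is a critical point of `V`. -/
theorem stmt10 (n : ℕ) (hn : 3 ≤ n) (U W U' W' : ℝ → ℝ)
    (hU : ∀ x > (0 : ℝ), HasDerivAt U (U' x) x)
    (hW : ∀ x > (0 : ℝ), HasDerivAt W (W' x) x)
    (a : ℝ) (ha : 0 < a) :
    letI ζ : ℝ := 2 * Real.pi / n
    letI s : ℕ → ℝ := fun k => 2 * Real.sin ((k : ℝ) * Real.pi / n)
    letI pt : Fin n → ℂ := fun j => (a : ℂ) * Complex.exp (Complex.I * (j.val : ℂ) * (ζ : ℂ))
    letI G : Fin n → ℂ := fun j => pt j *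
      ((2 * U' (a ^ 2 * (s 1) ^ 2) * (s 1) ^ 2
          + ∑ k ∈ Finset.range (n - 1), W' (a ^ 2 * (s (k + 1)) ^ 2) * (s (k + 1)) ^ 2 : ℝ) : ℂ)
    (∀ j : Fin n,
        HasFDerivAt (fun z : ℂ => chainV n U W (Function.update pt j z))
          (gradFunctional (G j)) (pt j)) ∧
    (U' (a ^ 2 * (s 1) ^ 2)
          = -(1 / (2 * (s 1) ^ 2))
              * ∑ k ∈ Finset.range (n - 1), W' (a ^ 2 * (s (k + 1)) ^ 2) * (s (k + 1)) ^ 2 →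
      ∀ j : Fin n,
        HasFDerivAt (fun z : ℂ => chainV n U W (Function.update pt j z))
          (0 : ℂ →L[ℝ] ℝ) (pt j)) := by
  have hpt : (fun j : Fin n => (a : ℂ) * exp (I * (j.val : ℂ) * ((2 * Real.pi / n : ℝ) : ℂ)))
      = regularPolygon n a := by
    funext j
    rw [regularPolygon, polygonRoot_pow]
    congr 2
    push_cast
    ring
  have hgrad := hasFDerivAt_chainV_update_regularPolygon hn hU hW ha.ne'
  refine hpt ▸ ⟨hgrad, fun hcrit j => ?_⟩
  have hcrit' : U' (a ^ 2 * chord n 1 ^ 2) = -(1 / (2 * chord n 1 ^ 2))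
      * ∑ k ∈ range (n - 1), W' (a ^ 2 * chord n (k + 1) ^ 2) * chord n (k + 1) ^ 2 := hcrit
  have hs : chord n 1 ≠ 0 := (chord_pos one_pos (by omega)).ne'
  have hcoef : 2 * U' (a ^ 2 * chord n 1 ^ 2) * chord n 1 ^ 2
      + ∑ k ∈ range (n - 1), W' (a ^ 2 * chord n (k + 1) ^ 2) * chord n (k + 1) ^ 2 = 0 := by
    rw [hcrit']
    field_simp
    ring
  simpa [hcoef, gradFunctional_eq_innerSL] using hgrad j
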